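/- Let n ≥ 1 and let X be an infinite subshift of symbolic rank ≤ n. Suppose X = X_V where V has a proper rank-n construction. Then (X, σ) is an essentially minimal Cantor system. In particular, there is k ∈ ℕ such that 0^k is not a subword of V. -/

import Mathlib

/-!
Write `W_i = v_{i,1}`: these words are nested prefixes of `V`, and properness makes every word of
`S_{i+1}` contain every word of `S_i`. The key lemma: a point `x ∈ X_V` avoiding some block `1^m`
contains every word of `V`. Indeed a long window of `x` sits inside some `W_i`, a concatenation of
words of `S_{I+1}` separated by spacers; being long and free of `1^m` it covers one of those
words, hence `W_I`.

So either `1^∞ ∈ X_V` lies in every closed invariant subset, or `X_V` is minimal; either way some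
point lies in every subsystem, and the closure of its orbit is the unique minimal set. An
isolated point of `X_V` is periodic, because its isolating window recurs in `W_{i+2}` at two
different places; its finite orbit would then contain that universal point, which lies in the
derived set. Finally, if every `0^k` occurred in `V`, then `0^∞ ∈ X_V` and the key lemma would
make every word of `V` a power of `0`, so `X_V` would be finite.
-/

namespace SubshiftRank

/-! ### Words over the alphabet {0,1}; `false` plays the role of `0`, `true` of `1`. -/

abbrev Word := List Bool

/-- `ℱ`: the set of finite nonempty words over `{0,1}` beginning and ending with `0`. -/
def FF : Set Word := {w | w ≠ [] ∧ w.head? = some false ∧ w.getLast? = some false}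

/-- `spacer s = 1^s`. -/
def spacer (s : ℕ) : Word := List.replicate s true

/-- A building: a sequence of words `v₁, …, v_k` with spacers `s₁, …, s_k` (the `pairs`),
followed by a final word `v_{k+1}` (the `last`).  The assembled word is
`v₁1^{s₁}v₂1^{s₂}⋯v_k1^{s_k}v_{k+1}`. -/
structure Building where
  pairs : List (Word × ℕ)
  last : Word

/-- The word assembled by a building. -/
def Building.word (b : Building) : Word :=
  b.pairs.foldr (fun p acc => p.1 ++ spacer p.2 ++ acc) b.last

/-- The words `v₁, …, v_{k+1}` used in a building (in order). -/
def Building.pieces (b : Building) : List Word := b.pairs.map Prod.fst ++ [b.last]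

/-- `b` is a building from the set `S`: there is at least one spacer (i.e. `k ≥ 1`, at least
two pieces) and all the pieces belong to `S`. -/
def Building.FromSet (b : Building) (S : Set Word) : Prop :=
  b.pairs ≠ [] ∧ ∀ v ∈ b.pieces, v ∈ S

/-- The first word of a building. -/
def Building.firstPiece (b : Building) : Word := b.pieces.headI

/-- Every word of `S` is used in the building. -/
def Building.UsesAll (b : Building) (S : Set Word) : Prop := ∀ v ∈ S, v ∈ b.pieces

/-- The spacer parameter of the building is bounded by `M`. -/
def Building.SpacersLE (b : Building) (M : ℕ) : Prop := ∀ p ∈ b.pairs, p.2 ≤ M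

/-- `w` is built from `S`. -/
def BuiltFrom (w : Word) (S : Set Word) : Prop := ∃ b : Building, b.FromSet S ∧ b.word = w

/-- The `i`-th level `S_i = {v_{i,1}, …, v_{i,n_i}}` of a generating sequence. -/
def levelSet (ni : ℕ → ℕ) (wd : ℕ → ℕ → Word) (i : ℕ) : Set Word :=
  {w | ∃ j, 1 ≤ j ∧ j ≤ ni i ∧ wd i j = w}

/-- A (symbolic) rank-`n` construction: a rank-`n` generating sequence `v_{i,j}`
(`i ≥ 0`, `1 ≤ j ≤ n_i ≤ n`) together with, for each `i` and `1 ≤ j ≤ n_{i+1}`, one chosen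
building of `v_{i+1,j}` from `S_i`, the building of `v_{i+1,1}` starting with `v_{i,1}`. -/
structure RankConstruction (n : ℕ) where
  ni : ℕ → ℕ
  wd : ℕ → ℕ → Word
  bld : ℕ → ℕ → Building
  ni_pos : ∀ i, 1 ≤ ni i
  ni_le : ∀ i, ni i ≤ n
  mem_FF : ∀ i j, 1 ≤ j → j ≤ ni i → wd i j ∈ FF
  wd_zero : ∀ j, 1 ≤ j → j ≤ ni 0 → wd 0 j = [false]
  bld_from : ∀ i j, 1 ≤ j → j ≤ ni (i + 1) → (bld i j).FromSet (levelSet ni wd i)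
  bld_word : ∀ i j, 1 ≤ j → j ≤ ni (i + 1) → (bld i j).word = wd (i + 1) j
  bld_start : ∀ i, (bld i 1).firstPiece = wd i 1

/-- A rank-`n` construction is proper if `n_i = n` for all `i` and every word of `S_i` is used
in each chosen building. -/
def RankConstruction.Proper {n : ℕ} (c : RankConstruction n) : Prop :=
  (∀ i, c.ni i = n) ∧
    ∀ i j, 1 ≤ j → j ≤ c.ni (i + 1) → (c.bld i j).UsesAll (levelSet c.ni c.wd i)

/-- All spacer parameters of all chosen buildings are bounded by `M`. -/
def RankConstruction.SpacersBoundedBy {n : ℕ} (c : RankConstruction n) (M : ℕ) : Prop :=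
  ∀ i j, 1 ≤ j → j ≤ c.ni (i + 1) → (c.bld i j).SpacersLE M

/-- The spacer parameter of the construction is bounded. -/
def RankConstruction.BoundedSpacer {n : ℕ} (c : RankConstruction n) : Prop :=
  ∃ M, c.SpacersBoundedBy M

/-- `w` is of the form `α1^{s₁}v_{j₁}1^{s₂}v_{j₂}⋯v_{j_{k−1}}1^{s_k}β` where `k ≥ 1`, the
middle words belong to `S`, `α` is a nonempty suffix of a word of `S` and `β` is a nonempty
prefix of a word of `S`. -/
def BadDecomp (w : Word) (S : Set Word) : Prop :=
  ∃ (α β : Word) (mids : List (ℕ × Word)) (sk : ℕ),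
    α ≠ [] ∧ β ≠ [] ∧ (∃ a ∈ S, α <:+ a) ∧ (∃ b ∈ S, β <+: b) ∧
    (∀ p ∈ mids, p.2 ∈ S) ∧
    w = α ++ mids.foldr (fun p acc => spacer p.1 ++ p.2 ++ acc) (spacer sk ++ β)

/-- A rank-`n` construction is good if it is proper and no `v_{i,j}` has a bad decomposition
over `S_i`. -/
def RankConstruction.Good {n : ℕ} (c : RankConstruction n) : Prop :=
  c.Proper ∧ ∀ i j, 1 ≤ j → j ≤ c.ni i → ¬ BadDecomp (c.wd i j) (levelSet c.ni c.wd i)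

/-- The finite word `w` is a prefix (initial segment) of the infinite word `V`. -/
def InfExtends (V : ℕ → Bool) (w : Word) : Prop := ∀ k, k < w.length → w.getD k false = V k

/-- `V = lim_i v_{i,1}` is the infinite word determined by the construction. -/
def RankConstruction.HasLimit {n : ℕ} (c : RankConstruction n) (V : ℕ → Bool) : Prop :=
  (∀ i, InfExtends V (c.wd i 1)) ∧ ∀ m : ℕ, ∃ i, m ≤ (c.wd i 1).length

/-- The infinite word `V` has a rank-`n` construction. -/
def HasRankConstr (V : ℕ → Bool) (n : ℕ) : Prop := ∃ c : RankConstruction n, c.HasLimit V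

/-! ### Occurrences and subshifts -/

/-- The finite word `u` occurs in the infinite word `V` at position `p`. -/
def OccursAtInf (u : Word) (V : ℕ → Bool) (p : ℕ) : Prop :=
  ∀ k, k < u.length → u.getD k false = V (p + k)

/-- `u` is a subword of the infinite word `V`. -/
def OccursInInf (u : Word) (V : ℕ → Bool) : Prop := ∃ p, OccursAtInf u V p

/-- The finite word `u` occurs in the bi-infinite word `x` at position `p`. -/
def OccursAtBi (u : Word) (x : ℤ → Bool) (p : ℤ) : Prop :=
  ∀ k : ℕ, k < u.length → u.getD k false = x (p + (k : ℤ))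

/-- `u` is a subword of the bi-infinite word `x`. -/
def OccursInBi (u : Word) (x : ℤ → Bool) : Prop := ∃ p, OccursAtBi u x p

/-- The Bernoulli shift `σ` on `{0,1}^ℤ`. -/
def shift (x : ℤ → Bool) : ℤ → Bool := fun k => x (k + 1)

/-- The subshift generated by the infinite word `V`. -/
def XV (V : ℕ → Bool) : Set (ℤ → Bool) := {x | ∀ u : Word, OccursInBi u x → OccursInInf u V}

/-- The `σ`-orbit of `x`. -/
def sorbit (x : ℤ → Bool) : Set (ℤ → Bool) := Set.range fun n : ℤ => fun k => x (k + n)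

/-- A subshift: a nonempty closed shift-invariant subset of `{0,1}^ℤ`. -/
def IsSubshift (X : Set (ℤ → Bool)) : Prop := X.Nonempty ∧ IsClosed X ∧ shift '' X = X

/-- A minimal subshift: every orbit is dense. -/
def MinimalSubshift (X : Set (ℤ → Bool)) : Prop :=
  IsSubshift X ∧ ∀ x ∈ X, X ⊆ closure (sorbit x)

/-- `X` has symbolic rank at most `n`. -/
def SymbRankLE (X : Set (ℤ → Bool)) (n : ℕ) : Prop := ∃ V, HasRankConstr V n ∧ X = XV V

/-- `X` has symbolic rank exactly `n`. -/
def SymbRankEq (X : Set (ℤ → Bool)) (n : ℕ) : Prop :=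
  SymbRankLE X n ∧ ∀ m, SymbRankLE X m → n ≤ m

/-- `M` is a minimal subset of the system `(X, shift)`: a nonempty closed shift-invariant
subset of `X` with no proper nonempty closed shift-invariant subset. -/
def IsMinimalSubsetOf (X M : Set (ℤ → Bool)) : Prop :=
  M.Nonempty ∧ IsClosed M ∧ M ⊆ X ∧ shift '' M = M ∧
    ∀ M', M' ⊆ M → M'.Nonempty → IsClosed M' → shift '' M' = M' → M' = M

/-- A bi-infinite word `x` is built from `v`: there is a strictly increasing bi-infinite
sequence of positions, with consecutive gaps at least `|v|` and unbounded in both directions,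
at each of which `v` occurs, and `x` equals `1` outside those occurrences. -/
def BiBuiltFrom (x : ℤ → Bool) (v : Word) : Prop :=
  ∃ pos : ℤ → ℤ, StrictMono pos ∧
    (∀ i : ℤ, pos i + (v.length : ℤ) ≤ pos (i + 1)) ∧
    (∀ n : ℤ, ∃ i : ℤ, n < pos i) ∧ (∀ n : ℤ, ∃ i : ℤ, pos i < n) ∧
    (∀ i : ℤ, OccursAtBi v x (pos i)) ∧
    (∀ p : ℤ, (∀ i : ℤ, ¬ (pos i ≤ p ∧ p < pos i + (v.length : ℤ))) → x p = true)

/-! ### General topological dynamics on (Cantor) metric spaces -/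

/-- Every orbit of `T` is dense. -/
def MinimalHomeo {X : Type*} [TopologicalSpace X] (T : X ≃ₜ X) : Prop :=
  ∀ x : X, Dense (Set.range fun n : ℤ => (T.toEquiv ^ n) x)

/-- The system `(X, T)` is equicontinuous. -/
def EquicontinuousSys {X : Type*} [MetricSpace X] (T : X ≃ₜ X) : Prop :=
  ∀ ε : ℝ, 0 < ε → ∃ δ : ℝ, 0 < δ ∧
    ∀ (n : ℤ) (x y : X), dist x y < δ → dist ((T.toEquiv ^ n) x) ((T.toEquiv ^ n) y) < ε

/-- `M` is a minimal set of `(X, T)`. -/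
def IsMinimalSet {X : Type*} [TopologicalSpace X] (T : X → X) (M : Set X) : Prop :=
  M.Nonempty ∧ IsClosed M ∧ T '' M = M ∧
    ∀ M', M' ⊆ M → M'.Nonempty → IsClosed M' → T '' M' = M' → M' = M

/-- `(X, T)` is essentially minimal: it has a unique minimal set. -/
def EssentiallyMinimal {X : Type*} [TopologicalSpace X] (T : X → X) : Prop :=
  ∃! M, IsMinimalSet T M

/-- `A` has the finite covering property: `⋃_{−N ≤ n ≤ N} T^n A = X` for some `N`. -/
def FiniteCovering {X : Type*} [TopologicalSpace X] (T : X ≃ₜ X) (A : Set X) : Prop :=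
  ∃ N : ℕ, (⋃ n ∈ Finset.Icc (-(N : ℤ)) (N : ℤ), ⇑(T.toEquiv ^ n) '' A) = Set.univ

/-- A finite partition of the whole space into clopen sets. -/
def IsClopenPartition {X : Type*} [TopologicalSpace X] (Q : Finset (Set X)) : Prop :=
  (∀ q ∈ Q, IsClopen q) ∧ (⋃ q ∈ Q, q) = Set.univ ∧
    ∀ q ∈ Q, ∀ q' ∈ Q, q ≠ q' → Disjoint q q'

/-- A Kakutani–Rohlin partition of `(X, T)`: clopen bases `B 0, …, B (d−1)` with heights
`h 0, …, h (d−1)` such that the sets `T^j (B k)` (`j < h k`) form a partition of `X` and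
`⋃_k T^{h k} (B k) = ⋃_k B k`. -/
structure KRPart {X : Type*} [TopologicalSpace X] (T : X → X) where
  d : ℕ
  B : Fin d → Set X
  h : Fin d → ℕ
  d_pos : 0 < d
  h_pos : ∀ k, 0 < h k
  clopen : ∀ k, IsClopen (B k)
  disj : ∀ (k k' : Fin d) (j j' : ℕ), j < h k → j' < h k' → (k, j) ≠ (k', j') →
    Disjoint (T^[j] '' B k) (T^[j'] '' B k')
  cover : (⋃ k, ⋃ j ∈ Finset.range (h k), T^[j] '' B k) = Set.univ
  base_eq : (⋃ k, T^[h k] '' B k) = ⋃ k, B k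

/-- The base of a Kakutani–Rohlin partition. -/
def KRPart.base {X : Type*} [TopologicalSpace X] {T : X → X} (P : KRPart T) : Set X :=
  ⋃ k, P.B k

/-- `(X, T)` has topological rank at most `m` (Kakutani–Rohlin characterization). -/
def TopRankLEGen {X : Type*} [MetricSpace X] (T : X → X) (m : ℕ) : Prop :=
  ∃ x : X, ∀ ε : ℝ, 0 < ε → ∃ P : KRPart T, P.d ≤ m ∧
    (∀ (k : Fin P.d) (j : ℕ), j < P.h k → Metric.diam (T^[j] '' P.B k) < ε) ∧
    Metric.diam P.base < ε ∧ x ∈ P.base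

/-! ### Kakutani–Rohlin partitions and topological rank for subshifts -/

/-- A Kakutani–Rohlin partition of the subshift `(X, σ)`. -/
structure KRPartOn (X : Set (ℤ → Bool)) where
  d : ℕ
  B : Fin d → Set (ℤ → Bool)
  h : Fin d → ℕ
  d_pos : 0 < d
  h_pos : ∀ k, 0 < h k
  subset : ∀ k, B k ⊆ X
  clopen : ∀ k, IsClopen {y : X | (y : ℤ → Bool) ∈ B k}
  disj : ∀ (k k' : Fin d) (j j' : ℕ), j < h k → j' < h k' → (k, j) ≠ (k', j') →
    Disjoint (shift^[j] '' B k) (shift^[j'] '' B k')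
  cover : (⋃ k, ⋃ j ∈ Finset.range (h k), shift^[j] '' B k) = X
  base_eq : (⋃ k, shift^[h k] '' B k) = ⋃ k, B k

/-- The base of a Kakutani–Rohlin partition of a subshift. -/
def KRPartOn.base {X : Set (ℤ → Bool)} (P : KRPartOn X) : Set (ℤ → Bool) := ⋃ k, P.B k

/-- All elements of `A` agree on the window `[−N, N]`; for the canonical metric on `2^ℤ`
this says exactly that `diam(A) ≤ 2^{−N}`. -/
def AgreeOn (N : ℕ) (A : Set (ℤ → Bool)) : Prop :=
  ∀ y ∈ A, ∀ z ∈ A, ∀ k : ℤ, |k| ≤ (N : ℤ) → y k = z k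

/-- The subshift `(X, σ)` has topological rank at most `m` (Kakutani–Rohlin
characterization, with smallness of diameters expressed by agreement on windows,
matching the canonical compatible metric on `2^ℤ`). -/
def TopRankLE (X : Set (ℤ → Bool)) (m : ℕ) : Prop :=
  ∃ x ∈ X, ∀ N : ℕ, ∃ P : KRPartOn X, P.d ≤ m ∧
    (∀ (k : Fin P.d) (j : ℕ), j < P.h k → AgreeOn N (shift^[j] '' P.B k)) ∧
    AgreeOn N P.base ∧ x ∈ P.base

/-! ### Factor maps and conjugacy -/

/-- `φ` is a (topological) factor map from the subshift `Y` onto the subshift `X`. -/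
def IsFactorMapOn (Y X : Set (ℤ → Bool)) (φ : (ℤ → Bool) → (ℤ → Bool)) : Prop :=
  ContinuousOn φ Y ∧ φ '' Y = X ∧ ∀ y ∈ Y, φ (shift y) = shift (φ y)

/-- `X` is a topological factor of `Y`. -/
def SubshiftFactor (Y X : Set (ℤ → Bool)) : Prop := ∃ φ, IsFactorMapOn Y X φ

/-- The subshifts `Y` and `X` are conjugate. -/
def SubshiftConjugate (Y X : Set (ℤ → Bool)) : Prop :=
  ∃ φ, IsFactorMapOn Y X φ ∧ Set.InjOn φ Y

/-- `(X, T)` is conjugate to the subshift `(Y, σ)`. -/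
def ConjugateToSubshift {X : Type*} [TopologicalSpace X] (T : X ≃ₜ X) (Y : Set (ℤ → Bool)) :
    Prop :=
  ∃ φ : X → (ℤ → Bool), Continuous φ ∧ Function.Injective φ ∧ Set.range φ = Y ∧
    ∀ x, φ (T x) = shift (φ x)

/-- The Boolean algebra of sets generated by `G`. -/
inductive GenBoolAlg {X : Type*} (G : Set (Set X)) : Set X → Prop
  | basic (A : Set X) : A ∈ G → GenBoolAlg G A
  | empty : GenBoolAlg G ∅
  | compl (A : Set X) : GenBoolAlg G A → GenBoolAlg G Aᶜ
  | union (A B : Set X) : GenBoolAlg G A → GenBoolAlg G B → GenBoolAlg G (A ∪ B)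

/-- `(T, A)` is generating: the smallest Boolean algebra containing all `T^n A` contains
every clopen set. -/
def Generating {X : Type*} [TopologicalSpace X] (T : X ≃ₜ X) (A : Set X) : Prop :=
  ∀ U : Set X, IsClopen U → GenBoolAlg {B : Set X | ∃ n : ℤ, B = ⇑(T.toEquiv ^ n) '' A} U

/-- The return-times word `Ret_A(x₀) ∈ 2^ℤ` of `x₀` to `A`. -/
noncomputable def retWord {X : Type*} [TopologicalSpace X] (T : X ≃ₜ X) (A : Set X) (x₀ : X) : ℤ → Bool :=
  fun n => @ite _ ((T.toEquiv ^ n) x₀ ∈ A) (Classical.propDecidable _) true false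

open Filter Topology

theorem _root_.List.IsInfix.exists_prefix_drop {α : Type*} {u w : List α} (h : u <:+: w) :
    ∃ q, u <+: w.drop q := by
  obtain ⟨s, t, rfl⟩ := h
  exact ⟨s.length, by simp⟩

namespace Building

@[simp] theorem word_mk_cons (v : Word) (s : ℕ) (tl : List (Word × ℕ)) (last : Word) :
    (Building.mk ((v, s) :: tl) last).word = v ++ spacer s ++ (Building.mk tl last).word :=
  rfl

@[simp] theorem pieces_mk_cons (v : Word) (s : ℕ) (tl : List (Word × ℕ)) (last : Word) :
    (Building.mk ((v, s) :: tl) last).pieces = v :: (Building.mk tl last).pieces :=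
  rfl

@[simp] theorem word_mk_nil (last : Word) : (Building.mk [] last).word = last := rfl

@[simp] theorem pieces_mk_nil (last : Word) : (Building.mk [] last).pieces = [last] := rfl

theorem exists_mem_pieces_prefix_word (b : Building) : ∃ v ∈ b.pieces, v <+: b.word := by
  obtain ⟨_ | ⟨⟨v, s⟩, tl⟩, last⟩ := b
  · exact ⟨last, by simp, List.prefix_refl _⟩
  · exact ⟨v, by simp, by simp [List.append_assoc]⟩

theorem infix_word_of_mem_pieces {b : Building} {v : Word} (hv : v ∈ b.pieces) :
    v <:+: b.word := by
  obtain ⟨pairs, last⟩ := b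
  induction pairs with
  | nil => simp_all
  | cons p tl ih =>
    obtain ⟨w, s⟩ := p
    rcases List.mem_cons.mp hv with rfl | hv
    · simpa [List.append_assoc] using (List.prefix_append v _).isInfix
    · simpa using (ih hv).trans (List.suffix_append (w ++ spacer s) _).isInfix

def append (b : Building) (s : ℕ) (b' : Building) : Building :=
  ⟨b.pairs ++ (b.last, s) :: b'.pairs, b'.last⟩

theorem word_append (b : Building) (s : ℕ) (b' : Building) :
    (b.append s b').word = b.word ++ spacer s ++ b'.word := by
  obtain ⟨pairs, last⟩ := b
  induction pairs with
  | nil => rfl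
  | cons p tl ih => simp_all [append, Building.word, List.append_assoc]

theorem pieces_append (b : Building) (s : ℕ) (b' : Building) :
    (b.append s b').pieces = b.pieces ++ b'.pieces := by
  simp [append, Building.pieces]


theorem exists_mem_pieces_infix_of_prefix_spacer_append {b : Building} {L m s : ℕ}
    (hL : ∀ v ∈ b.pieces, v.length ≤ L) {y : Word} (hy : y <+: spacer s ++ b.word)
    (hlen : L + m ≤ y.length) (hrun : ¬ List.replicate m true <:+: y) :
    ∃ v ∈ b.pieces, v <:+: y := by
  have hs : s < m := by
    by_contra! hms
    have hrep : List.replicate m true <+: spacer s ++ b.word :=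
      (List.prefix_replicate_iff.2 ⟨by simpa using hms, by simp⟩).trans (List.prefix_append _ _)
    exact hrun (List.prefix_of_prefix_length_le hrep hy (by simp; omega)).isInfix
  obtain ⟨y', rfl⟩ : spacer s <+: y :=
    List.prefix_of_prefix_length_le (List.prefix_append _ _) hy (by simp [spacer]; omega)
  obtain ⟨v, hv, hvb⟩ := b.exists_mem_pieces_prefix_word
  have hvy' : v <+: y' := by
    refine List.prefix_of_prefix_length_le hvb ((List.prefix_append_right_inj _).1 hy) ?_
    have := hL v hv
    simp only [spacer, List.length_append, List.length_replicate] at hlen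
    omega
  exact ⟨v, hv, hvy'.isInfix.trans (List.suffix_append _ _).isInfix⟩

theorem exists_mem_pieces_infix {b : Building} {L m : ℕ} (hL : ∀ v ∈ b.pieces, v.length ≤ L)
    {u : Word} (hu : u <:+: b.word) (hlen : 2 * L + m + 1 ≤ u.length)
    (hrun : ¬ List.replicate m true <:+: u) : ∃ v ∈ b.pieces, v <:+: u := by
  -- Past a partial piece (at most `L` letters) and a spacer (fewer than `m`, as `u` avoids `1^m`),
  -- at least `L` letters of `u` remain, and they cover the next piece.
  obtain ⟨pairs, last⟩ := b
  induction pairs generalizing u with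
  | nil =>
    have := hu.length_le
    have := hL last (by simp)
    simp only [word_mk_nil] at *
    omega
  | cons p tl ih =>
    obtain ⟨v, s⟩ := p
    simp only [pieces_mk_cons, List.mem_cons, forall_eq_or_imp, exists_eq_or_imp] at hL ⊢
    rw [word_mk_cons, List.append_assoc, List.infix_append_iff] at hu
    rcases hu with hu | hu | ⟨u₁, u₂, rfl, hu₁, hu₂⟩
    · have := hu.length_le
      omega
    · rw [List.infix_append_iff] at hu
      rcases hu with hu | hu | ⟨u₁, u₂, rfl, hu₁, hu₂⟩
      · obtain ⟨-, hu⟩ := List.infix_replicate_iff.1 hu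
        exact absurd (hu ▸ List.infix_replicate_iff.2 ⟨by simp; omega, by simp⟩) hrun
      · exact Or.inr (ih hlen hrun hL.2 hu)
      · obtain ⟨-, hu₁⟩ := List.suffix_replicate_iff.1 hu₁
        refine Or.inr (exists_mem_pieces_infix_of_prefix_spacer_append hL.2 (s := u₁.length)
          ?_ (by omega) hrun)
        rw [spacer, ← hu₁]
        exact (List.prefix_append_right_inj u₁).2 hu₂
    · refine Or.inr ?_
      obtain ⟨w, hw, hwu⟩ := exists_mem_pieces_infix_of_prefix_spacer_append hL.2 hu₂
        (by have := hu₁.length_le; simp only [List.length_append] at hlen; omega)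
        (fun h => hrun (h.trans (List.suffix_append _ _).isInfix))
      exact ⟨w, hw, hwu.trans (List.suffix_append _ _).isInfix⟩

end Building

/-- Like `BuiltFrom`, but a single piece without spacers is allowed. -/
def WeaklyBuiltFrom (w : Word) (S : Set Word) : Prop :=
  ∃ b : Building, (∀ v ∈ b.pieces, v ∈ S) ∧ b.word = w

theorem weaklyBuiltFrom_of_mem {w : Word} {S : Set Word} (hw : w ∈ S) : WeaklyBuiltFrom w S :=
  ⟨⟨[], w⟩, by simpa using hw, rfl⟩

theorem Building.weaklyBuiltFrom_word {S : Set Word} (b : Building)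
    (hb : ∀ v ∈ b.pieces, WeaklyBuiltFrom v S) : WeaklyBuiltFrom b.word S := by
  obtain ⟨pairs, last⟩ := b
  induction pairs with
  | nil => simpa using hb
  | cons p tl ih =>
    obtain ⟨v, s⟩ := p
    obtain ⟨b₁, hb₁S, hb₁⟩ := hb v (by simp)
    obtain ⟨b₂, hb₂S, hb₂⟩ := ih fun w hw => hb w (by simp [hw])
    refine ⟨b₁.append s b₂, ?_, by rw [Building.word_append, hb₁, hb₂]; rfl⟩
    simpa [Building.pieces_append, or_imp, forall_and] using ⟨hb₁S, hb₂S⟩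

theorem occursAtInf_of_prefix_drop {V : ℕ → Bool} {w u : Word} (hw : InfExtends V w) {q : ℕ}
    (h : u <+: w.drop q) : OccursAtInf u V q := by
  intro k hk
  have hlt : q + k < w.length := by
    have := h.length_le
    simp only [List.length_drop] at this
    omega
  rw [List.getD_eq_getElem _ _ hk, h.getElem hk, List.getElem_drop, ← hw _ hlt,
    List.getD_eq_getElem _ _ hlt]

theorem prefix_drop_of_occursAtInf {V : ℕ → Bool} {w u : Word} (hw : InfExtends V w) {q : ℕ}
    (h : OccursAtInf u V q) (hq : q + u.length ≤ w.length) : u <+: w.drop q := by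
  rw [List.prefix_iff_eq_take]
  refine List.ext_getElem (by simp; omega) fun k hk _ => ?_
  have hk' := h k hk
  rw [List.getD_eq_getElem _ _ hk] at hk'
  rw [hk', List.getElem_take, List.getElem_drop, ← hw _ (by omega), List.getD_eq_getElem]

namespace RankConstruction

variable {n : ℕ} (c : RankConstruction n) {V : ℕ → Bool}

theorem wd_one_mem_levelSet (i : ℕ) : c.wd i 1 ∈ levelSet c.ni c.wd i :=
  ⟨1, le_rfl, c.ni_pos i, rfl⟩

theorem exists_length_le_of_mem_levelSet (i : ℕ) :
    ∃ L, ∀ v ∈ levelSet c.ni c.wd i, v.length ≤ L := by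
  obtain ⟨L, hL⟩ := ((Set.finite_Icc 1 (c.ni i)).image fun j => (c.wd i j).length).bddAbove
  exact ⟨L, by rintro _ ⟨j, hj₁, hj₂, rfl⟩; exact hL ⟨j, ⟨hj₁, hj₂⟩, rfl⟩⟩

theorem exists_wd_succ_one_eq (i : ℕ) : ∃ (s : ℕ) (b : Building),
    (∀ v ∈ b.pieces, v ∈ levelSet c.ni c.wd i) ∧
      c.wd (i + 1) 1 = c.wd i 1 ++ spacer s ++ b.word := by
  have hfrom := c.bld_from i 1 le_rfl (c.ni_pos _)
  have hstart := c.bld_start i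
  rw [← c.bld_word i 1 le_rfl (c.ni_pos _)]
  generalize c.bld i 1 = b at hfrom hstart
  obtain ⟨_ | ⟨⟨v, s⟩, tl⟩, last⟩ := b
  · exact absurd rfl hfrom.1
  · change v = c.wd i 1 at hstart
    subst hstart
    exact ⟨s, ⟨tl, last⟩, fun w hw => hfrom.2 w (by simp [hw]), rfl⟩

theorem wd_one_prefix_wd_succ_one (i : ℕ) : c.wd i 1 <+: c.wd (i + 1) 1 := by
  obtain ⟨s, b, -, h⟩ := c.exists_wd_succ_one_eq i
  rw [h, List.append_assoc]
  exact List.prefix_append _ _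

theorem wd_one_prefix_of_le {i j : ℕ} (h : i ≤ j) : c.wd i 1 <+: c.wd j 1 := by
  induction j, h using Nat.le_induction with
  | base => exact List.prefix_refl _
  | succ j _ ih => exact ih.trans (c.wd_one_prefix_wd_succ_one j)

variable {c}

theorem weaklyBuiltFrom_of_mem_levelSet {I i : ℕ} (hIi : I ≤ i) {w : Word}
    (hw : w ∈ levelSet c.ni c.wd i) : WeaklyBuiltFrom w (levelSet c.ni c.wd I) := by
  induction i, hIi using Nat.le_induction generalizing w with
  | base => exact weaklyBuiltFrom_of_mem hw
  | succ i _ ih =>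
    obtain ⟨j, hj₁, hj₂, rfl⟩ := hw
    rw [← c.bld_word i j hj₁ hj₂]
    exact (c.bld i j).weaklyBuiltFrom_word fun v hv => ih ((c.bld_from i j hj₁ hj₂).2 v hv)

theorem Proper.infix_of_mem_levelSet (hpr : c.Proper) {i : ℕ} {v w : Word}
    (hv : v ∈ levelSet c.ni c.wd i) (hw : w ∈ levelSet c.ni c.wd (i + 1)) : v <:+: w := by
  obtain ⟨j, hj₁, hj₂, rfl⟩ := hw
  rw [← c.bld_word i j hj₁ hj₂]
  exact Building.infix_word_of_mem_pieces (hpr.2 i j hj₁ hj₂ v hv)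

/-- The second piece of the building of `v_{i+2,1}` lies in `S_{i+1}`, so by properness it
contains `v_{i,1}`. -/
theorem Proper.exists_prefix_drop_wd_add_two (hpr : c.Proper) {i : ℕ} {u : Word}
    (hu : u <:+: c.wd i 1) : ∃ q, (c.wd (i + 1) 1).length ≤ q ∧ u <+: (c.wd (i + 2) 1).drop q := by
  obtain ⟨s, b, hbS, hb⟩ := c.exists_wd_succ_one_eq (i + 1)
  obtain ⟨v, hv, hvb⟩ := b.exists_mem_pieces_prefix_word
  have hub : u <:+: b.word :=
    hu.trans ((hpr.infix_of_mem_levelSet (c.wd_one_mem_levelSet i) (hbS v hv)).trans hvb.isInfix)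
  obtain ⟨r, hr⟩ := hub.exists_prefix_drop
  refine ⟨(c.wd (i + 1) 1 ++ spacer s).length + r, by simp; omega, ?_⟩
  rwa [show i + 2 = i + 1 + 1 from rfl, hb, List.drop_append, List.drop_eq_nil_of_le (by omega),
    List.nil_append, Nat.add_sub_cancel_left]

theorem HasLimit.occursInInf_wd (hlim : c.HasLimit V) (i : ℕ) : OccursInInf (c.wd i 1) V :=
  ⟨0, fun k hk => by rw [hlim.1 i k hk, zero_add]⟩

theorem HasLimit.eventually_le_length (hlim : c.HasLimit V) (R : ℕ) :
    ∀ᶠ i in atTop, R ≤ (c.wd i 1).length := by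
  obtain ⟨i₀, hi₀⟩ := hlim.2 R
  exact eventually_atTop.2 ⟨i₀, fun i hi => hi₀.trans (c.wd_one_prefix_of_le hi).length_le⟩

theorem HasLimit.eventually_infix (hlim : c.HasLimit V) {u : Word} (hu : OccursInInf u V) :
    ∀ᶠ i in atTop, u <:+: c.wd i 1 := by
  obtain ⟨q, hq⟩ := hu
  filter_upwards [hlim.eventually_le_length (q + u.length)] with i hi
  exact (prefix_drop_of_occursAtInf (hlim.1 i) hq hi).isInfix.trans (List.drop_suffix _ _).isInfix

theorem Proper.exists_occursAtInf_ge (hpr : c.Proper) (hlim : c.HasLimit V) {u : Word}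
    (hu : OccursInInf u V) (R : ℕ) : ∃ q, R ≤ q ∧ OccursAtInf u V q := by
  obtain ⟨i, hi, hR⟩ := ((hlim.eventually_infix hu).and (hlim.eventually_le_length R)).exists
  obtain ⟨q, hq, hu⟩ := hpr.exists_prefix_drop_wd_add_two hi
  exact ⟨q, hR.trans ((c.wd_one_prefix_wd_succ_one i).length_le.trans hq),
    occursAtInf_of_prefix_drop (hlim.1 _) hu⟩

end RankConstruction

def window (x : ℤ → Bool) (a : ℤ) (l : ℕ) : Word := List.ofFn fun k : Fin l => x (a + k)

@[simp] theorem length_window (x : ℤ → Bool) (a : ℤ) (l : ℕ) : (window x a l).length = l :=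
  List.length_ofFn

theorem occursAtBi_window_iff {x y : ℤ → Bool} {a b : ℤ} {l : ℕ} :
    OccursAtBi (window x a l) y b ↔ ∀ k : ℕ, k < l → x (a + k) = y (b + k) := by
  unfold OccursAtBi
  rw [length_window]
  refine forall₂_congr fun k hk => ?_
  rw [List.getD_eq_getElem _ _ (by simpa using hk)]
  simp [window]

theorem occursAtBi_window_self (x : ℤ → Bool) (a : ℤ) (l : ℕ) : OccursAtBi (window x a l) x a :=
  occursAtBi_window_iff.2 fun _ _ => rfl

theorem OccursAtBi.congr_window {u : Word} {y z : ℤ → Bool} {b : ℤ}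
    (h : OccursAtBi (window z b u.length) y b) : OccursAtBi u z b ↔ OccursAtBi u y b := by
  rw [occursAtBi_window_iff] at h
  exact forall₂_congr fun k hk => by rw [h k hk]

theorem OccursAtBi.of_prefix_drop {u w : Word} {x : ℤ → Bool} {a : ℤ} {q : ℕ}
    (h : OccursAtBi w x a) (hu : u <+: w.drop q) : OccursAtBi u x (a + q) := by
  intro k hk
  have hlt : q + k < w.length := by
    have := hu.length_le
    simp only [List.length_drop] at this
    omega
  rw [List.getD_eq_getElem _ _ hk, hu.getElem hk, List.getElem_drop,
    ← List.getD_eq_getElem _ false hlt, h _ hlt]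
  congr 1
  push_cast
  ring

theorem OccursAtBi.occursInBi_of_infix {u w : Word} {x : ℤ → Bool} {a : ℤ}
    (h : OccursAtBi w x a) (hu : u <:+: w) : OccursInBi u x :=
  let ⟨_, hq⟩ := hu.exists_prefix_drop
  ⟨_, h.of_prefix_drop hq⟩

theorem eq_replicate_of_occursAtBi_const {u : Word} {b : Bool} {a : ℤ}
    (h : OccursAtBi u (fun _ => b) a) : u = List.replicate u.length b := by
  refine List.eq_replicate_iff.2 ⟨rfl, fun c hc => ?_⟩
  obtain ⟨k, hk, rfl⟩ := List.getElem_of_mem hc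
  have hk' := h k hk
  rwa [List.getD_eq_getElem _ _ hk] at hk'

theorem isOpen_setOf_occursAtBi (u : Word) (a : ℤ) :
    IsOpen {x : ℤ → Bool | OccursAtBi u x a} := by
  simp only [OccursAtBi, Set.ofPred_forall]
  refine (Set.finite_lt_nat _).isOpen_biInter fun k _ => ?_
  have hc : Continuous fun x : ℤ → Bool => x (a + k) := continuous_apply _
  convert hc.isOpen_preimage _ (isOpen_discrete {u.getD k false}) using 1
  ext
  simp [eq_comm]

theorem exists_window_subset_of_mem_nhds {x : ℤ → Bool} {U : Set (ℤ → Bool)} (hU : U ∈ 𝓝 x) :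
    ∃ P : ℕ, {y | OccursAtBi (window x (-P) (2 * P + 1)) y (-P)} ⊆ U := by
  rw [nhds_pi, Filter.mem_pi] at hU
  obtain ⟨I, hI, t, ht, hIt⟩ := hU
  refine ⟨hI.toFinset.sup Int.natAbs, fun y hy => hIt fun k hk => ?_⟩
  have hkP : k.natAbs ≤ hI.toFinset.sup Int.natAbs := Finset.le_sup (hI.mem_toFinset.2 hk)
  have hyk := occursAtBi_window_iff.1 hy (k + hI.toFinset.sup Int.natAbs).toNat (by omega)
  rw [show -((hI.toFinset.sup Int.natAbs : ℕ) : ℤ) + ((k + hI.toFinset.sup Int.natAbs).toNat : ℕ)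
    = k by omega] at hyk
  exact hyk ▸ mem_of_mem_nhds (ht k)

def shiftBy (d : ℤ) : (ℤ → Bool) ≃ₜ (ℤ → Bool) where
  toFun x k := x (k + d)
  invFun x k := x (k - d)
  left_inv x := by simp
  right_inv x := by simp
  continuous_toFun := continuous_pi fun k => continuous_apply (k + d)
  continuous_invFun := continuous_pi fun k => continuous_apply (k - d)

@[simp] theorem shiftBy_apply (d : ℤ) (x : ℤ → Bool) (k : ℤ) : shiftBy d x k = x (k + d) := rfl

theorem shiftBy_one : ⇑(shiftBy 1) = shift := rfl

theorem shiftBy_shiftBy (d e : ℤ) (x : ℤ → Bool) :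
    shiftBy d (shiftBy e x) = shiftBy (d + e) x := by
  ext k
  simp [add_assoc]

@[simp] theorem shiftBy_zero (x : ℤ → Bool) : shiftBy 0 x = x := by
  ext k
  simp

theorem shiftBy_neg_shiftBy (d : ℤ) (x : ℤ → Bool) : shiftBy (-d) (shiftBy d x) = x := by
  rw [shiftBy_shiftBy, neg_add_cancel, shiftBy_zero]

theorem shiftBy_shiftBy_neg (d : ℤ) (x : ℤ → Bool) : shiftBy d (shiftBy (-d) x) = x := by
  rw [shiftBy_shiftBy, add_neg_cancel, shiftBy_zero]

theorem shiftBy_mem_sorbit (d : ℤ) (x : ℤ → Bool) : shiftBy d x ∈ sorbit x := ⟨d, rfl⟩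

theorem mem_sorbit_self (x : ℤ → Bool) : x ∈ sorbit x := ⟨0, funext fun k => by simp⟩

theorem occursAtBi_shiftBy {u : Word} {x : ℤ → Bool} {a d : ℤ} :
    OccursAtBi u (shiftBy d x) a ↔ OccursAtBi u x (a + d) := by
  simp only [OccursAtBi, shiftBy_apply, add_right_comm]

theorem image_shift_eq_iff {M : Set (ℤ → Bool)} :
    shift '' M = M ↔ ∀ x ∈ M, ∀ d, shiftBy d x ∈ M := by
  refine ⟨fun hM x hx d => ?_, fun h => ?_⟩
  · induction d using Int.induction_on with
    | zero => simpa using hx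
    | succ d ih => exact hM ▸ ⟨_, ih, by rw [← shiftBy_one, shiftBy_shiftBy, add_comm]⟩
    | pred d ih =>
      obtain ⟨y, hy, hyx⟩ := hM.symm ▸ ih
      rwa [← shiftBy_neg_shiftBy 1 y, shiftBy_one, hyx, shiftBy_shiftBy, neg_add_eq_sub] at hy
  · refine Set.Subset.antisymm ?_ fun x hx => ⟨shiftBy (-1) x, h x hx _, shiftBy_shiftBy_neg 1 x⟩
    rintro _ ⟨x, hx, rfl⟩
    exact h x hx 1

theorem sorbit_subset {M : Set (ℤ → Bool)} (hM : shift '' M = M) {x : ℤ → Bool} (hx : x ∈ M) :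
    sorbit x ⊆ M := by
  rintro _ ⟨d, rfl⟩
  exact image_shift_eq_iff.1 hM x hx d

theorem image_shift_sorbit (x : ℤ → Bool) : shift '' sorbit x = sorbit x :=
  image_shift_eq_iff.2 fun _ ⟨e, he⟩ d => he ▸ shiftBy_shiftBy d e x ▸ shiftBy_mem_sorbit _ x

theorem image_shift_closure {M : Set (ℤ → Bool)} (hM : shift '' M = M) :
    shift '' closure M = closure M := by
  rw [← shiftBy_one, Homeomorph.image_closure, shiftBy_one, hM]

theorem closure_sorbit_subset {M : Set (ℤ → Bool)} (hMc : IsClosed M) (hMi : shift '' M = M)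
    {x : ℤ → Bool} (hx : x ∈ M) : closure (sorbit x) ⊆ M :=
  closure_minimal (sorbit_subset hMi hx) hMc

theorem mem_closure_sorbit_of_forall_occursInBi {y z : ℤ → Bool}
    (h : ∀ u, OccursInBi u z → OccursInBi u y) : z ∈ closure (sorbit y) := by
  refine mem_closure_iff_nhds.2 fun U hU => ?_
  obtain ⟨P, hP⟩ := exists_window_subset_of_mem_nhds hU
  obtain ⟨p, hp⟩ := h _ ⟨_, occursAtBi_window_self z (-P) (2 * P + 1)⟩
  refine ⟨shiftBy (p + P) y, hP (occursAtBi_shiftBy.2 ?_), shiftBy_mem_sorbit _ y⟩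
  convert hp using 1
  ring

def IsSubsystem (X M : Set (ℤ → Bool)) : Prop :=
  M.Nonempty ∧ IsClosed M ∧ M ⊆ X ∧ shift '' M = M

theorem existsUnique_isMinimalSubsetOf {X : Set (ℤ → Bool)} (hXc : IsClosed X)
    (hXi : shift '' X = X) {z : ℤ → Bool} (hzX : z ∈ X) (hz : ∀ M, IsSubsystem X M → z ∈ M) :
    ∃! M, IsMinimalSubsetOf X M := by
  have h₀ : IsSubsystem X (closure (sorbit z)) := ⟨⟨z, subset_closure (mem_sorbit_self z)⟩,
    isClosed_closure, closure_sorbit_subset hXc hXi hzX, image_shift_closure (image_shift_sorbit z)⟩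
  have hzM : ∀ M, IsSubsystem X M → closure (sorbit z) ⊆ M := fun M hM =>
    closure_sorbit_subset hM.2.1 hM.2.2.2 (hz M hM)
  refine ⟨_, ⟨h₀.1, h₀.2.1, h₀.2.2.1, h₀.2.2.2, fun M hMz hne hc hi =>
    hMz.antisymm (hzM M ⟨hne, hc, hMz.trans h₀.2.2.1, hi⟩)⟩, ?_⟩
  rintro M ⟨hne, hc, hMX, hi, hmin⟩
  exact (hmin _ (hzM M ⟨hne, hc, hMX, hi⟩) h₀.1 h₀.2.1 h₀.2.2.2).symm

theorem finite_sorbit_of_periodic {x : ℤ → Bool} {d : ℤ} (hx : Function.Periodic x d)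
    (hd : 0 < d) : (sorbit x).Finite := by
  refine ((Set.finite_Ico 0 d).image fun k => shiftBy k x).subset ?_
  rintro _ ⟨k, rfl⟩
  refine ⟨k % d, ⟨Int.emod_nonneg k hd.ne', Int.emod_lt_of_pos k hd⟩, funext fun j => ?_⟩
  change x (j + k % d) = x (j + k)
  rw [← hx.int_mul (k / d) (j + k % d), Int.cast_id]
  congr 1
  linarith [Int.emod_add_mul_ediv k d]

/-- If some point lies in every subsystem of an infinite `X`, it lies in the derived set of `X`,
which is a subsystem; a periodic point of `X` has that point in its finite orbit, so it is not
isolated either. -/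
theorem accPt_of_periodic {X : Set (ℤ → Bool)} (hXc : IsClosed X) (hXi : shift '' X = X)
    (hinf : X.Infinite) {z : ℤ → Bool} (hz : ∀ M, IsSubsystem X M → z ∈ M) {x : ℤ → Bool}
    (hx : x ∈ X) {d : ℤ} (hper : Function.Periodic x d) (hd : 0 < d) : AccPt x (𝓟 X) := by
  have hDi : ∀ y ∈ derivedSet X, ∀ e, shiftBy e y ∈ derivedSet X := fun y hy e =>
    derivedSet_mono _ _ (by rintro _ ⟨w, hw, rfl⟩; exact image_shift_eq_iff.1 hXi w hw e)
      ((shiftBy e).continuous.image_derivedSet (shiftBy e).injective ⟨y, hy, rfl⟩)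
  have hzD : z ∈ derivedSet X := hz _ ⟨hinf.exists_accPt_principal, isClosed_derivedSet X,
    (isClosed_iff_derivedSet_subset X).1 hXc, image_shift_eq_iff.2 hDi⟩
  obtain ⟨k, rfl⟩ : z ∈ sorbit x := hz _ ⟨⟨x, mem_sorbit_self x⟩,
    (finite_sorbit_of_periodic hper hd).isClosed, sorbit_subset hXi hx, image_shift_sorbit x⟩
  exact shiftBy_neg_shiftBy k x ▸ hDi (shiftBy k x) hzD (-k)

theorem isClosed_XV (V : ℕ → Bool) : IsClosed (XV V) := by
  have hXV : XV V = ⋂ (u : Word) (a : ℤ), {x | OccursAtBi u x a → OccursInInf u V} := by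
    ext
    simp [XV, OccursInBi]
  rw [hXV]
  refine isClosed_iInter fun u => isClosed_iInter fun a => ?_
  by_cases hu : OccursInInf u V
  · simp [hu]
  · simp only [hu, imp_false]
    exact (isOpen_setOf_occursAtBi u a).isClosed_compl

theorem shiftBy_mem_XV {V : ℕ → Bool} {x : ℤ → Bool} (hx : x ∈ XV V) (d : ℤ) :
    shiftBy d x ∈ XV V :=
  fun u ⟨a, ha⟩ => hx u ⟨a + d, occursAtBi_shiftBy.1 ha⟩

theorem image_shift_XV (V : ℕ → Bool) : shift '' XV V = XV V :=
  image_shift_eq_iff.2 fun _ hx => shiftBy_mem_XV hx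

theorem const_mem_XV {V : ℕ → Bool} {b : Bool} (h : ∀ m, OccursInInf (List.replicate m b) V) :
    (fun _ => b) ∈ XV V :=
  fun _ ⟨_, hu⟩ => eq_replicate_of_occursAtBi_const hu ▸ h _

/-- A limit point of the translates of `V` that put the deep occurrences of `w` at `a`. -/
theorem exists_mem_XV_occursAtBi {V : ℕ → Bool} {w : Word}
    (hw : ∀ R : ℕ, ∃ q, R ≤ q ∧ OccursAtInf w V q) (a : ℤ) : ∃ z ∈ XV V, OccursAtBi w z a := by
  choose q hqR hq using hw
  set y : ℕ → ℤ → Bool := fun R k => V (k - a + q R).toNat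
  have hyV : ∀ R u b, b.natAbs + a.natAbs ≤ R → OccursAtBi u (y R) b →
      OccursAtInf u V (b - a + q R).toNat := by
    intro R u b hR h k hk
    have := hqR R
    rw [h k hk]
    show V _ = V _
    congr 1
    omega
  have hyw : ∀ R, OccursAtBi w (y R) a := by
    intro R k hk
    rw [hq R k hk]
    show V _ = V _
    congr 1
    omega
  obtain ⟨z, -, hz⟩ := isCompact_univ.exists_mapClusterPt (f := atTop) (u := y) (by simp)
  have hfreq : ∀ b l N, ∃ R, N ≤ R ∧ OccursAtBi (window z b l) (y R) b := fun b l N =>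
    (((mapClusterPt_iff_frequently.1 hz) _ ((isOpen_setOf_occursAtBi _ b).mem_nhds
      (occursAtBi_window_self z b l))).and_eventually (eventually_ge_atTop N)).exists.imp
      fun _ h => ⟨h.2, h.1⟩
  refine ⟨z, fun u ⟨b, hb⟩ => ?_, ?_⟩
  · obtain ⟨R, hR, hzR⟩ := hfreq b u.length (b.natAbs + a.natAbs)
    exact ⟨_, hyV R u b hR (hzR.congr_window.1 hb)⟩
  · obtain ⟨R, -, hzR⟩ := hfreq a w.length 0
    exact hzR.congr_window.2 (hyw R)

namespace RankConstruction

variable {n : ℕ} {c : RankConstruction n} {V : ℕ → Bool}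

theorem Proper.occursInBi_of_occursInInf (hpr : c.Proper) (hlim : c.HasLimit V)
    {x : ℤ → Bool} (hx : x ∈ XV V) {m : ℕ} (hrun : ¬ OccursInBi (List.replicate m true) x)
    {u : Word} (hu : OccursInInf u V) : OccursInBi u x := by
  obtain ⟨I, hI⟩ := (hlim.eventually_infix hu).exists
  obtain ⟨L, hL⟩ := c.exists_length_le_of_mem_levelSet (I + 1)
  have hwx := occursAtBi_window_self x 0 (2 * L + m + 1)
  obtain ⟨i, hiw, hIi⟩ :=
    ((hlim.eventually_infix (hx _ ⟨0, hwx⟩)).and (eventually_ge_atTop (I + 1))).exists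
  obtain ⟨b, hbS, hb⟩ := weaklyBuiltFrom_of_mem_levelSet hIi (c.wd_one_mem_levelSet i)
  obtain ⟨v, hv, hvw⟩ := b.exists_mem_pieces_infix (fun v hv => hL v (hbS v hv)) (hb ▸ hiw)
    (by simp) (fun h => hrun (hwx.occursInBi_of_infix h))
  exact hwx.occursInBi_of_infix
    ((hI.trans (hpr.infix_of_mem_levelSet (c.wd_one_mem_levelSet I) (hbS v hv))).trans hvw)

theorem Proper.exists_mem_forall_isSubsystem (hpr : c.Proper) (hlim : c.HasLimit V)
    (hne : (XV V).Nonempty) : ∃ z ∈ XV V, ∀ M, IsSubsystem (XV V) M → z ∈ M := by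
  by_cases hones : ∀ m, OccursInInf (List.replicate m true) V
  · refine ⟨fun _ => true, const_mem_XV hones, fun M ⟨⟨y, hy⟩, hMc, hMX, hMi⟩ =>
      closure_sorbit_subset hMc hMi hy (mem_closure_sorbit_of_forall_occursInBi ?_)⟩
    rintro u ⟨a, hu⟩
    rw [eq_replicate_of_occursAtBi_const hu]
    by_contra h
    exact h (hpr.occursInBi_of_occursInInf hlim (hMX hy) h (hones _))
  · push Not at hones
    obtain ⟨m, hm⟩ := hones
    obtain ⟨z, hz⟩ := hne
    exact ⟨z, hz, fun M ⟨⟨y, hy⟩, hMc, hMX, hMi⟩ =>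
      closure_sorbit_subset hMc hMi hy (mem_closure_sorbit_of_forall_occursInBi fun u hu =>
        hpr.occursInBi_of_occursInInf hlim (hMX hy) (fun h => hm (hMX hy _ h)) (hz u hu))⟩

/-- An occurrence of `u` in `v_{i,1}` recurs in `v_{i+2,1}` further right; placing `v_{i+2,1}`
in a point of `X_V` with the first copy at `a` yields `x` itself, and the second copy then
exhibits a period of `x`. -/
theorem Proper.exists_periodic_of_isolating_word (hpr : c.Proper) (hlim : c.HasLimit V)
    {x : ℤ → Bool} (hx : x ∈ XV V) {u : Word} (hu : u ≠ []) {a : ℤ} (hux : OccursAtBi u x a)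
    (hdet : ∀ y ∈ XV V, OccursAtBi u y a → y = x) : ∃ d, 0 < d ∧ Function.Periodic x d := by
  obtain ⟨i, hi⟩ := (hlim.eventually_infix (hx u ⟨a, hux⟩)).exists
  obtain ⟨q₁, hq₁⟩ := hi.exists_prefix_drop
  obtain ⟨q₂, hq₂, hu₂⟩ := hpr.exists_prefix_drop_wd_add_two hi
  have hu₁ : u <+: (c.wd (i + 2) 1).drop q₁ :=
    hq₁.trans ((c.wd_one_prefix_of_le (by omega)).drop q₁)
  have hq : q₁ < q₂ := by
    have := hq₁.length_le
    have := (c.wd_one_prefix_wd_succ_one i).length_le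
    have := List.length_pos_of_ne_nil hu
    simp only [List.length_drop] at *
    omega
  obtain ⟨y, hy, hyw⟩ :=
    exists_mem_XV_occursAtBi (hpr.exists_occursAtInf_ge hlim (hlim.occursInInf_wd (i + 2)))
      (a - q₁)
  obtain rfl : y = x := hdet y hy (by simpa using hyw.of_prefix_drop hu₁)
  refine ⟨q₂ - q₁, by omega, fun k => congrFun (hdet _ (shiftBy_mem_XV hy _)
    (occursAtBi_shiftBy.2 ?_)) k⟩
  convert hyw.of_prefix_drop hu₂ using 1
  ring

theorem Proper.preperfect_XV (hpr : c.Proper) (hlim : c.HasLimit V) (hinf : (XV V).Infinite)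
    {z : ℤ → Bool} (hz : ∀ M, IsSubsystem (XV V) M → z ∈ M) : Preperfect (XV V) := by
  intro x hx
  by_contra hacc
  obtain ⟨U, hU, hUx⟩ : ∃ U ∈ 𝓝 x, ∀ y ∈ U ∩ XV V, y = x := by
    rw [accPt_iff_nhds] at hacc
    push Not at hacc
    exact hacc
  obtain ⟨P, hP⟩ := exists_window_subset_of_mem_nhds hU
  obtain ⟨d, hd, hper⟩ := hpr.exists_periodic_of_isolating_word hlim hx
    (List.ne_nil_of_length_pos (by simp)) (occursAtBi_window_self x (-P) (2 * P + 1))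
    fun y hy hyP => hUx y ⟨hP hyP, hy⟩
  exact hacc (accPt_of_periodic (isClosed_XV V) (image_shift_XV V) hinf hz hx hper hd)

theorem Proper.exists_replicate_false_not_occursInInf (hpr : c.Proper) (hlim : c.HasLimit V)
    (hinf : (XV V).Infinite) : ∃ k, ¬ OccursInInf (List.replicate k false) V := by
  by_contra! hzeros
  refine hinf ((Set.finite_singleton fun _ : ℤ => false).subset fun x hx => funext fun k => ?_)
  have hone : ¬ OccursInBi (List.replicate 1 true) (fun _ : ℤ => false) :=
    fun ⟨_, h⟩ => by simpa using h 0
  obtain ⟨_, h⟩ := hpr.occursInBi_of_occursInInf hlim (const_mem_XV hzeros) hone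
    (hx [x k] ⟨k, by simp [OccursAtBi]⟩)
  simpa using h 0

end RankConstruction

theorem statement_7_general (n : ℕ) (V : ℕ → Bool) (X : Set (ℤ → Bool))
    (hX : X = XV V) (hinf : X.Infinite)
    (c : RankConstruction n) (hlim : c.HasLimit V) (hproper : c.Proper) :
    Perfect X ∧ (∃! M : Set (ℤ → Bool), IsMinimalSubsetOf X M) ∧
      ∃ k : ℕ, ¬ OccursInInf (List.replicate k false) V := by
  subst hX
  obtain ⟨z, hzX, hz⟩ := hproper.exists_mem_forall_isSubsystem hlim hinf.nonempty
  exact ⟨⟨isClosed_XV V, hproper.preperfect_XV hlim hinf hz⟩,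
    existsUnique_isMinimalSubsetOf (isClosed_XV V) (image_shift_XV V) hzX hz,
    hproper.exists_replicate_false_not_occursInInf hlim hinf⟩

/-- Corollary 4.2. An infinite subshift of symbolic rank `≤ n` generated by
a word with a proper rank-`n` construction is an essentially minimal Cantor system; in
particular some `0^k` is not a subword of `V`. -/
theorem statement_7 (n : ℕ) (hn : 1 ≤ n) (V : ℕ → Bool) (X : Set (ℤ → Bool))
    (hX : X = XV V) (hinf : X.Infinite) (hrank : SymbRankLE X n)
    (c : RankConstruction n) (hlim : c.HasLimit V) (hproper : c.Proper) :
    Perfect X ∧ (∃! M : Set (ℤ → Bool), IsMinimalSubsetOf X M) ∧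
      ∃ k : ℕ, ¬ OccursInInf (List.replicate k false) V :=
  statement_7_general n V X hX hinf c hlim hproper

end SubshiftRank
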